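/- Let A ∈ ℝ^{d×n} with columns a₁, …, a_n, b ∈ ℝ^d, ε ≥ 0, λ ≥ 0. Then strong duality holds: the optimal value of min_{w ∈ ℝ^n} ‖A w − b‖₂ + ε‖w‖₂ + λ‖w‖₁ equals the supremum of −αᵀ b over all α ∈ ℝ^d and β ∈ ℝ^n satisfying ‖α‖₂ ≤ 1, ‖β‖₂ ≤ ε, and |a_iᵀ α + β_i| ≤ λ for every i = 1, …, n. -/
import Mathlib


open Matrix

/-- Euclidean norm of a vector in `ℝ^n`. -/
noncomputable def norm2 {n : ℕ} (x : Fin n → ℝ) : ℝ := Real.sqrt (∑ i, x i ^ 2)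

/-- ℓ1 norm of a vector in `ℝ^n`. -/
noncomputable def norm1 {n : ℕ} (x : Fin n → ℝ) : ℝ := ∑ i, |x i|


lemma norm2_eq {n : ℕ} (x : Fin n → ℝ) :
    norm2 x = ‖(WithLp.equiv 2 (Fin n → ℝ)).symm x‖ := by
  rw [EuclideanSpace.norm_eq]
  simp [norm2, sq_abs]

lemma norm2_nonneg {n : ℕ} (x : Fin n → ℝ) : 0 ≤ norm2 x := Real.sqrt_nonneg _

lemma norm2_add_le {n : ℕ} (x y : Fin n → ℝ) : norm2 (x + y) ≤ norm2 x + norm2 y := by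
  simp only [norm2_eq]
  exact norm_add_le _ _

lemma norm2_smul {n : ℕ} (c : ℝ) (x : Fin n → ℝ) : norm2 (c • x) = |c| * norm2 x := by
  simp only [norm2_eq]
  rw [show (WithLp.equiv 2 (Fin n → ℝ)).symm (c • x) = c • (WithLp.equiv 2 (Fin n → ℝ)).symm x from rfl]
  simp [norm_smul]

lemma dot_le_norm2 {n : ℕ} (x y : Fin n → ℝ) : x ⬝ᵥ y ≤ norm2 x * norm2 y := by
  have := real_inner_le_norm ((WithLp.equiv 2 (Fin n → ℝ)).symm x) ((WithLp.equiv 2 (Fin n → ℝ)).symm y)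
  rw [← norm2_eq, ← norm2_eq] at this
  simpa [PiLp.inner_apply, RCLike.inner_apply, dotProduct, mul_comm] using this

lemma dot_self_eq {n : ℕ} (x : Fin n → ℝ) : x ⬝ᵥ x = norm2 x ^ 2 := by
  rw [norm2, Real.sq_sqrt (by positivity)]
  simp [dotProduct, sq]

lemma abs_le_norm2 {n : ℕ} (x : Fin n → ℝ) (i : Fin n) : |x i| ≤ norm2 x := by
  rw [norm2, ← Real.sqrt_sq_eq_abs]
  exact Real.sqrt_le_sqrt (Finset.single_le_sum (f := fun i => x i ^ 2) (fun j _ => sq_nonneg _) (Finset.mem_univ i))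

lemma continuous_norm2 {n : ℕ} : Continuous (norm2 (n := n)) := by
  unfold norm2; fun_prop

lemma abs_sign_le_one (r : ℝ) : |Real.sign r| ≤ 1 := by
  rcases Real.sign_apply_eq r with h | h | h <;> simp [h]

lemma rsign_mul_self (r : ℝ) : Real.sign r * r = |r| := by
  rcases lt_trichotomy r 0 with h | h | h
  · rw [Real.sign_of_neg h, abs_of_neg h]; ring
  · simp [h]
  · rw [Real.sign_of_pos h, abs_of_pos h]; ring

lemma normalize_norm2_le {n : ℕ} (x : Fin n → ℝ) : norm2 ((norm2 x)⁻¹ • x) ≤ 1 := by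
  rw [norm2_smul]
  rcases eq_or_ne (norm2 x) 0 with h | h
  · simp [h]
  · rw [abs_of_nonneg (inv_nonneg.2 (norm2_nonneg x)), inv_mul_cancel₀ h]

lemma normalize_dot {n : ℕ} (x : Fin n → ℝ) : ((norm2 x)⁻¹ • x) ⬝ᵥ x = norm2 x := by
  rw [smul_dotProduct, dot_self_eq, smul_eq_mul]
  rcases eq_or_ne (norm2 x) 0 with h | h
  · simp [h]
  · field_simp [sq]

lemma sign_dot {n : ℕ} (lam : ℝ) (hlam : 0 ≤ lam) (w : Fin n → ℝ) :
    (∀ i, |lam * Real.sign (w i)| ≤ lam) ∧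
      (fun i => lam * Real.sign (w i)) ⬝ᵥ w = lam * norm1 w := by
  constructor
  · intro i
    rw [abs_mul, abs_of_nonneg hlam]
    nlinarith [abs_sign_le_one (w i), abs_nonneg (Real.sign (w i))]
  · rw [norm1, dotProduct, Finset.mul_sum]
    congr 1; ext i
    rw [mul_assoc, rsign_mul_self]

lemma weak_duality {d n : ℕ} (A : Matrix (Fin d) (Fin n) ℝ) (b : Fin d → ℝ)
    (ε lam : ℝ) (w : Fin n → ℝ) (α : Fin d → ℝ) (β : Fin n → ℝ)
    (hα : norm2 α ≤ 1) (hβ : norm2 β ≤ ε)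
    (hc : ∀ i, |(fun r => A r i) ⬝ᵥ α + β i| ≤ lam) :
    -(α ⬝ᵥ b) ≤ norm2 (A.mulVec w - b) + ε * norm2 w + lam * norm1 w := by
  have key : -(α ⬝ᵥ b) = α ⬝ᵥ (A.mulVec w - b) + β ⬝ᵥ w
      - ∑ i, ((fun r => A r i) ⬝ᵥ α + β i) * w i := by
    have h1 : α ⬝ᵥ (A.mulVec w) = ∑ i, ((fun r => A r i) ⬝ᵥ α) * w i := by
      rw [Matrix.dotProduct_mulVec]
      congr 1; ext i
      simp [Matrix.vecMul, dotProduct, mul_comm]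
    have h2 : α ⬝ᵥ (A.mulVec w - b) = α ⬝ᵥ (A.mulVec w) - α ⬝ᵥ b := by
      simp [dotProduct, Finset.sum_sub_distrib, mul_sub]
    rw [h2, h1]
    simp [dotProduct, add_mul, Finset.sum_add_distrib]
    all_goals ring
  rw [key]
  have b1 : α ⬝ᵥ (A.mulVec w - b) ≤ norm2 (A.mulVec w - b) := by
    calc α ⬝ᵥ (A.mulVec w - b) ≤ norm2 α * norm2 (A.mulVec w - b) := dot_le_norm2 _ _
    _ ≤ 1 * norm2 (A.mulVec w - b) := by
        exact mul_le_mul_of_nonneg_right hα (norm2_nonneg _)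
    _ = _ := one_mul _
  have b2 : β ⬝ᵥ w ≤ ε * norm2 w := by
    calc β ⬝ᵥ w ≤ norm2 β * norm2 w := dot_le_norm2 _ _
    _ ≤ ε * norm2 w := mul_le_mul_of_nonneg_right hβ (norm2_nonneg _)
  have b3 : -∑ i, ((fun r => A r i) ⬝ᵥ α + β i) * w i ≤ lam * norm1 w := by
    rw [norm1, Finset.mul_sum, ← Finset.sum_neg_distrib]
    apply Finset.sum_le_sum
    intro i _
    calc -(((fun r => A r i) ⬝ᵥ α + β i) * w i) ≤ |((fun r => A r i) ⬝ᵥ α + β i) * w i| :=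
          neg_le_abs _
    _ = |(fun r => A r i) ⬝ᵥ α + β i| * |w i| := abs_mul _ _
    _ ≤ lam * |w i| := mul_le_mul_of_nonneg_right (hc i) (abs_nonneg _)
  linarith

lemma primal_attain {d n : ℕ} (A : Matrix (Fin d) (Fin n) ℝ) (b : Fin d → ℝ)
    (ε lam : ℝ) (hε : 0 ≤ ε) (hlam : 0 ≤ lam) (w : Fin n → ℝ) :
    ∃ (α : Fin d → ℝ) (β γ : Fin n → ℝ),
      norm2 α ≤ 1 ∧ norm2 β ≤ ε ∧ (∀ i, |γ i| ≤ lam) ∧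
      ((fun i => (fun r => A r i) ⬝ᵥ α + β i + γ i) ⬝ᵥ w) + -(α ⬝ᵥ b)
        = norm2 (A.mulVec w - b) + ε * norm2 w + lam * norm1 w := by
  refine ⟨(norm2 (A.mulVec w - b))⁻¹ • (A.mulVec w - b), ε • ((norm2 w)⁻¹ • w),
    fun i => lam * Real.sign (w i), normalize_norm2_le _, ?_, (sign_dot lam hlam w).1, ?_⟩
  · rw [norm2_smul, abs_of_nonneg hε]
    calc ε * norm2 ((norm2 w)⁻¹ • w) ≤ ε * 1 :=
      mul_le_mul_of_nonneg_left (normalize_norm2_le _) hε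
    _ = ε := mul_one _
  · set α : Fin d → ℝ := (norm2 (A.mulVec w - b))⁻¹ • (A.mulVec w - b) with hαdef
    set β : Fin n → ℝ := ε • ((norm2 w)⁻¹ • w) with hβdef
    set γ : Fin n → ℝ := fun i => lam * Real.sign (w i) with hγdef
    have hsplit : (fun i => (fun r => A r i) ⬝ᵥ α + β i + γ i) ⬝ᵥ w
        = (∑ i, ((fun r => A r i) ⬝ᵥ α) * w i) + β ⬝ᵥ w + γ ⬝ᵥ w := by
      simp [dotProduct, add_mul, Finset.sum_add_distrib]
    have h1 : ∑ i, ((fun r => A r i) ⬝ᵥ α) * w i = α ⬝ᵥ (A.mulVec w) := by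
      rw [Matrix.dotProduct_mulVec]
      congr 1; ext i
      simp [Matrix.vecMul, dotProduct, mul_comm]
    have h2 : α ⬝ᵥ (A.mulVec w) + -(α ⬝ᵥ b) = α ⬝ᵥ (A.mulVec w - b) := by
      simp [dotProduct, Finset.sum_sub_distrib, mul_sub]
      all_goals ring
    have h3 : α ⬝ᵥ (A.mulVec w - b) = norm2 (A.mulVec w - b) := normalize_dot _
    have h4 : β ⬝ᵥ w = ε * norm2 w := by
      rw [hβdef, smul_dotProduct, smul_eq_mul, normalize_dot]
    have h5 : γ ⬝ᵥ w = lam * norm1 w := (sign_dot lam hlam w).2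
    rw [hsplit, h1, h4, h5]
    rw [show α ⬝ᵥ A.mulVec w + ε * norm2 w + lam * norm1 w + -(α ⬝ᵥ b)
      = (α ⬝ᵥ A.mulVec w + -(α ⬝ᵥ b)) + ε * norm2 w + lam * norm1 w by ring, h2, h3]

lemma ball2_convex {m : ℕ} (r : ℝ) : Convex ℝ {x : Fin m → ℝ | norm2 x ≤ r} := by
  intro x hx y hy a c ha hc hac
  simp only [Set.mem_setOf_eq] at *
  calc norm2 (a • x + c • y) ≤ norm2 (a • x) + norm2 (c • y) := norm2_add_le _ _
  _ = a * norm2 x + c * norm2 y := by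
      rw [norm2_smul, norm2_smul, abs_of_nonneg ha, abs_of_nonneg hc]
  _ ≤ a * r + c * r :=
      add_le_add (mul_le_mul_of_nonneg_left hx ha) (mul_le_mul_of_nonneg_left hy hc)
  _ = r := by rw [← add_mul, hac, one_mul]

lemma box_convex {m : ℕ} (lam : ℝ) : Convex ℝ {x : Fin m → ℝ | ∀ i, |x i| ≤ lam} := by
  intro x hx y hy a c ha hc hac
  intro i
  simp only [Pi.add_apply, Pi.smul_apply, smul_eq_mul]
  calc |a * x i + c * y i| ≤ |a * x i| + |c * y i| := abs_add_le _ _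
  _ = a * |x i| + c * |y i| := by
      rw [abs_mul, abs_mul, abs_of_nonneg ha, abs_of_nonneg hc]
  _ ≤ a * lam + c * lam :=
      add_le_add (mul_le_mul_of_nonneg_left (hx i) ha) (mul_le_mul_of_nonneg_left (hy i) hc)
  _ = lam := by rw [← add_mul, hac, one_mul]

noncomputable def lassoPhi {d n : ℕ} (A : Matrix (Fin d) (Fin n) ℝ) (b : Fin d → ℝ) :
    ((Fin d → ℝ) × (Fin n → ℝ) × (Fin n → ℝ)) →ₗ[ℝ] ((Fin n → ℝ) × ℝ) where
  toFun q := ((fun i => (fun r => A r i) ⬝ᵥ q.1 + q.2.1 i + q.2.2 i), -(q.1 ⬝ᵥ b))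
  map_add' q q' := by
    refine Prod.ext ?_ ?_
    · funext i
      simp [dotProduct_add, add_dotProduct]
      ring
    · simp [add_dotProduct]
      ring
  map_smul' c q := by
    refine Prod.ext ?_ ?_
    · funext i
      simp [dotProduct_smul, smul_dotProduct]
      ring
    · simp [smul_dotProduct]
      all_goals ring

def lassoK {d n : ℕ} (ε lam : ℝ) : Set ((Fin d → ℝ) × (Fin n → ℝ) × (Fin n → ℝ)) :=
  {q | norm2 q.1 ≤ 1 ∧ norm2 q.2.1 ≤ ε ∧ ∀ i, |q.2.2 i| ≤ lam}

lemma lassoK_convex {d n : ℕ} (ε lam : ℝ) : Convex ℝ (lassoK (d := d) (n := n) ε lam) := by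
  intro q hq q' hq' a c ha hc hac
  exact ⟨ball2_convex 1 hq.1 hq'.1 ha hc hac,
    ball2_convex ε hq.2.1 hq'.2.1 ha hc hac,
    box_convex lam hq.2.2 hq'.2.2 ha hc hac⟩

lemma lassoK_compact {d n : ℕ} (ε lam : ℝ) : IsCompact (lassoK (d := d) (n := n) ε lam) := by
  rw [Metric.isCompact_iff_isClosed_bounded]
  constructor
  · have h1 : IsClosed {q : (Fin d → ℝ) × (Fin n → ℝ) × (Fin n → ℝ) | norm2 q.1 ≤ 1} :=
      isClosed_le (continuous_norm2.comp continuous_fst) continuous_const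
    have h2 : IsClosed {q : (Fin d → ℝ) × (Fin n → ℝ) × (Fin n → ℝ) | norm2 q.2.1 ≤ ε} :=
      isClosed_le (continuous_norm2.comp (continuous_fst.comp continuous_snd)) continuous_const
    have h3 : IsClosed {q : (Fin d → ℝ) × (Fin n → ℝ) × (Fin n → ℝ) | ∀ i, |q.2.2 i| ≤ lam} := by
      have : {q : (Fin d → ℝ) × (Fin n → ℝ) × (Fin n → ℝ) | ∀ i, |q.2.2 i| ≤ lam}
          = ⋂ i, {q | |q.2.2 i| ≤ lam} := by ext q; simp
      rw [this]
      exact isClosed_iInter fun i => isClosed_le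
        (continuous_abs.comp ((continuous_apply i).comp (continuous_snd.comp continuous_snd)))
        continuous_const
    exact h1.inter (h2.inter h3)
  · rw [isBounded_iff_forall_norm_le]
    refine ⟨max 1 (max ε lam), fun q hq => ?_⟩
    have hC : (0:ℝ) ≤ max 1 (max ε lam) := le_trans zero_le_one (le_max_left _ _)
    rw [Prod.norm_def, Prod.norm_def]
    refine max_le ?_ (max_le ?_ ?_)
    · rw [pi_norm_le_iff_of_nonneg hC]
      intro i
      exact le_trans (le_trans (abs_le_norm2 _ i) hq.1) (le_max_left _ _)
    · rw [pi_norm_le_iff_of_nonneg hC]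
      intro i
      exact le_trans (le_trans (abs_le_norm2 _ i) hq.2.1)
        (le_trans (le_max_left _ _) (le_max_right _ _))
    · rw [pi_norm_le_iff_of_nonneg hC]
      intro i
      exact le_trans (hq.2.2 i) (le_trans (le_max_right _ _) (le_max_right _ _))

noncomputable def lassoS {d n : ℕ} (A : Matrix (Fin d) (Fin n) ℝ) (b : Fin d → ℝ)
    (ε lam : ℝ) : Set ((Fin n → ℝ) × ℝ) := lassoPhi A b '' lassoK ε lam

lemma lassoS_mem_iff {d n : ℕ} (A : Matrix (Fin d) (Fin n) ℝ) (b : Fin d → ℝ)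
    (ε lam : ℝ) (z : (Fin n → ℝ) × ℝ) :
    z ∈ lassoS A b ε lam ↔ ∃ (α : Fin d → ℝ) (β γ : Fin n → ℝ), norm2 α ≤ 1 ∧ norm2 β ≤ ε ∧ (∀ i, |γ i| ≤ lam) ∧
      z.1 = (fun i => (fun r => A r i) ⬝ᵥ α + β i + γ i) ∧ z.2 = -(α ⬝ᵥ b) := by
  constructor
  · rintro ⟨q, hq, rfl⟩
    exact ⟨q.1, q.2.1, q.2.2, hq.1, hq.2.1, hq.2.2, rfl, rfl⟩
  · rintro ⟨α, β, γ, h1, h2, h3, h4, h5⟩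
    refine ⟨(α, β, γ), ⟨h1, h2, h3⟩, ?_⟩
    refine Prod.ext h4.symm h5.symm

lemma lassoS_convex {d n : ℕ} (A : Matrix (Fin d) (Fin n) ℝ) (b : Fin d → ℝ)
    (ε lam : ℝ) : Convex ℝ (lassoS A b ε lam) :=
  (lassoK_convex ε lam).linear_image (lassoPhi A b)

lemma lassoS_compact {d n : ℕ} (A : Matrix (Fin d) (Fin n) ℝ) (b : Fin d → ℝ)
    (ε lam : ℝ) : IsCompact (lassoS A b ε lam) :=
  (lassoK_compact ε lam).image (lassoPhi A b).continuous_of_finiteDimensional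

/-- Strong duality for the regularized square-root LASSO:
`min_w ‖Aw − b‖₂ + ε‖w‖₂ + λ‖w‖₁ = max { −αᵀb : ‖α‖₂ ≤ 1, ‖β‖₂ ≤ ε, |a_iᵀα + β_i| ≤ λ ∀i }`. -/
theorem regularized_sqrt_lasso_strong_duality
    {d n : ℕ} (A : Matrix (Fin d) (Fin n) ℝ) (b : Fin d → ℝ)
    (ε lam : ℝ) (hε : 0 ≤ ε) (hlam : 0 ≤ lam) :
    sInf {t : ℝ | ∃ w : Fin n → ℝ,
        t = norm2 (A.mulVec w - b) + ε * norm2 w + lam * norm1 w} =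
      sSup {t : ℝ | ∃ (α : Fin d → ℝ) (β : Fin n → ℝ),
        norm2 α ≤ 1 ∧ norm2 β ≤ ε ∧
        (∀ i : Fin n, |(fun r => A r i) ⬝ᵥ α + β i| ≤ lam) ∧
        t = -(α ⬝ᵥ b)} := by
  set Sp := {t : ℝ | ∃ w : Fin n → ℝ,
      t = norm2 (A.mulVec w - b) + ε * norm2 w + lam * norm1 w} with hSpdef
  set Sd := {t : ℝ | ∃ (α : Fin d → ℝ) (β : Fin n → ℝ),
      norm2 α ≤ 1 ∧ norm2 β ≤ ε ∧
      (∀ i : Fin n, |(fun r => A r i) ⬝ᵥ α + β i| ≤ lam) ∧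
      t = -(α ⬝ᵥ b)} with hSddef
  have hSpne : Sp.Nonempty := ⟨_, 0, rfl⟩
  have h0Sd : (0:ℝ) ∈ Sd := by
    refine ⟨0, 0, ?_, ?_, ?_, ?_⟩ <;> simp [norm2, hε, hlam]
  have hSdne : Sd.Nonempty := ⟨0, h0Sd⟩
  have hweak : ∀ t ∈ Sd, ∀ t' ∈ Sp, t ≤ t' := by
    rintro t ⟨α, β, hα, hβ, hc, rfl⟩ t' ⟨w, rfl⟩
    exact weak_duality A b ε lam w α β hα hβ hc
  have hbddSp : BddBelow Sp := by
    refine ⟨0, ?_⟩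
    rintro t ⟨w, rfl⟩
    have h1 := norm2_nonneg (A.mulVec w - b)
    have h2 := norm2_nonneg w
    have h3 : (0:ℝ) ≤ norm1 w := Finset.sum_nonneg fun i _ => abs_nonneg _
    have := mul_nonneg hε h2
    have := mul_nonneg hlam h3
    linarith
  have hbddSd : BddAbove Sd := by
    obtain ⟨t', ht'⟩ := hSpne
    exact ⟨t', fun t ht => hweak t ht t' ht'⟩
  refine le_antisymm ?_ (csSup_le hSdne fun t ht => le_csInf hSpne fun t' ht' => hweak t ht t' ht')
  set D := sSup Sd with hDdef
  have hslice : ∀ s : ℝ, ((0 : Fin n → ℝ), s) ∈ lassoS A b ε lam ↔ s ∈ Sd := by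
    intro s
    rw [lassoS_mem_iff]
    constructor
    · rintro ⟨α, β, γ, h1, h2, h3, h4, h5⟩
      refine ⟨α, β, h1, h2, fun i => ?_, h5⟩
      have hz := congrFun h4 i
      simp only [Pi.zero_apply] at hz
      have hz2 : (fun r => A r i) ⬝ᵥ α + β i = -γ i := by linarith [hz.symm]
      rw [hz2, abs_neg]
      exact h3 i
    · rintro ⟨α, β, h1, h2, h3, h5⟩
      refine ⟨α, β, fun i => -((fun r => A r i) ⬝ᵥ α + β i), h1, h2,
        fun i => by rw [abs_neg]; exact h3 i, ?_, h5⟩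
      funext i
      simp only [Pi.zero_apply]
      ring
  have hDSd : D ∈ Sd := by
    have hSdclosed : IsClosed Sd := by
      have heq : Sd = (fun s : ℝ => ((0 : Fin n → ℝ), s)) ⁻¹' (lassoS A b ε lam) := by
        ext s
        simp only [Set.mem_preimage]
        exact (hslice s).symm
      rw [heq]
      exact ((lassoS_compact A b ε lam).isClosed).preimage (Continuous.prodMk_right _)
    have hSdbdd : Bornology.IsBounded Sd := by
      obtain ⟨C, hC⟩ := isBounded_iff_forall_norm_le.1 (lassoS_compact A b ε lam).isBounded
      refine isBounded_iff_forall_norm_le.2 ⟨C, fun s hs => ?_⟩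
      have h := hC _ ((hslice s).2 hs)
      rw [Prod.norm_def] at h
      exact le_trans (le_max_right _ _) h
    exact (Metric.isCompact_iff_isClosed_bounded.2 ⟨hSdclosed, hSdbdd⟩).sSup_mem hSdne
  refine le_of_forall_gt_imp_ge_of_dense fun c hc => ?_
  have hpnot : ((0 : Fin n → ℝ), c) ∉ lassoS A b ε lam := by
    intro hmem
    exact absurd (le_csSup hbddSd ((hslice c).1 hmem)) (not_le.2 hc)
  obtain ⟨f, u, hfS, hfp⟩ := geometric_hahn_banach_closed_point
    (lassoS_convex A b ε lam) (lassoS_compact A b ε lam).isClosed hpnot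
  set t := f ((0 : Fin n → ℝ), (1:ℝ)) with htdef
  set w₀ : Fin n → ℝ := fun i => f ((Pi.single i 1 : Fin n → ℝ), (0:ℝ)) with hw0def
  have hrep : ∀ (v : Fin n → ℝ) (s : ℝ), f (v, s) = (∑ i, v i * w₀ i) + s * t := by
    intro v s
    have hv : ((v, s) : (Fin n → ℝ) × ℝ)
        = (∑ i, (v i) • (((Pi.single i (1:ℝ)) : Fin n → ℝ), (0:ℝ)))
          + s • (((0 : Fin n → ℝ)), (1:ℝ)) := by
      refine Prod.ext ?_ ?_
      · simp only [Prod.fst_add, Prod.fst_sum, Prod.smul_fst, smul_zero, add_zero]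
        funext j
        simp [Finset.sum_apply, Pi.single_apply, Finset.sum_ite_eq']
      · simp [Prod.snd_sum]
    rw [hv, map_add, map_sum]
    congr 1
    · refine Finset.sum_congr rfl fun i _ => ?_
      rw [_root_.map_smul, smul_eq_mul]
    · rw [_root_.map_smul, smul_eq_mul]
  have h1 : D * t < u := by
    have h := hfS _ ((hslice D).2 hDSd)
    rw [hrep] at h
    simpa using h
  have h2 : u < c * t := by
    have h := hfp
    rw [hrep] at h
    simpa using h
  have ht : 0 < t := by nlinarith
  set w : Fin n → ℝ := t⁻¹ • w₀ with hwdef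
  obtain ⟨α, β, γ, hα, hβ, hγ, heq⟩ := primal_attain A b ε lam hε hlam w
  have hmemS : (((fun i => (fun r => A r i) ⬝ᵥ α + β i + γ i) : Fin n → ℝ), -(α ⬝ᵥ b))
      ∈ lassoS A b ε lam :=
    (lassoS_mem_iff A b ε lam _).2 ⟨α, β, γ, hα, hβ, hγ, rfl, rfl⟩
  have h3 := hfS _ hmemS
  rw [hrep] at h3
  have hval : norm2 (A.mulVec w - b) + ε * norm2 w + lam * norm1 w
      = t⁻¹ * ((∑ i, ((fun r => A r i) ⬝ᵥ α + β i + γ i) * w₀ i) + (-(α ⬝ᵥ b)) * t) := by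
    rw [← heq]
    have hdot : ((fun i => (fun r => A r i) ⬝ᵥ α + β i + γ i) : Fin n → ℝ) ⬝ᵥ w
        = t⁻¹ * ∑ i, ((fun r => A r i) ⬝ᵥ α + β i + γ i) * w₀ i := by
      rw [hwdef, dotProduct, Finset.mul_sum]
      refine Finset.sum_congr rfl fun i _ => ?_
      simp only [Pi.smul_apply, smul_eq_mul]
      ring
    rw [hdot]
    field_simp
  have hfin : norm2 (A.mulVec w - b) + ε * norm2 w + lam * norm1 w < c := by
    rw [hval]
    have hlt := mul_lt_mul_of_pos_left h3 (inv_pos.2 ht)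
    refine lt_of_lt_of_le hlt ?_
    rw [inv_mul_le_iff₀ ht]
    nlinarith
  exact le_trans (csInf_le hbddSp ⟨w, rfl⟩) (le_of_lt hfin)
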